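/- For every finite graph G with lw(G) ≥ 1, the pathwidth of G is at most the linearwidth of G: pw(G) ≤ lw(G). -/

import Mathlib

/-!
Take a layout `e₀, …, e_{m-1}` of width `k` and let the `t`-th bag consist of the vertices lying on
an edge `e_i` with `i ≤ t` and on an edge `e_j` with `j ≥ t`; the interval property is then
automatic, and the bag is `mid(π_{<t}) ∪ V(e_t)`. If `e_t` shares an endpoint `w` with another
edge, `w` already lies in `mid(π_{<t})` or in `mid(π_{≤t})`, and both cuts have at most `k`
vertices, so the bag has at most `k + 1`. Isolated edges and isolated vertices are taken out of
these bags and given bags of their own in front, which meet no other bag.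
-/

variable {V : Type*} [Fintype V] [DecidableEq V]

/-- `Vs F` is the set of endpoints of edges in `F`. -/
def Vs (F : Finset (Sym2 V)) : Finset V :=
  Finset.univ.filter (fun v => ∃ e ∈ F, v ∈ e)

/-- The set of endpoints of a single edge. -/
def eset (e : Sym2 V) : Finset V := Finset.univ.filter (fun v => v ∈ e)

/-- `mids E F` is mid(F) = V(F) ∩ V(E \ F), relative to the edge set `E`. -/
def mids (E F : Finset (Sym2 V)) : Finset V := Vs F ∩ Vs (E \ F)

/-- `dd E F` is d(F) = |mid(F)|, relative to the edge set `E`. -/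
def dd (E F : Finset (Sym2 V)) : ℕ := (mids E F).card

/-- A layout of the edge set `E`: a duplicate-free list enumerating `E`
(equivalently, a bijection {1,…,m} → E). -/
def IsLayout (E : Finset (Sym2 V)) (L : List (Sym2 V)) : Prop :=
  L.Nodup ∧ L.toFinset = E

/-- The (partial) layout `L` has width at most `k` w.r.t. the edge set `E`:
every prefix `π_{≤ i}` satisfies d(π_{≤ i}) ≤ k. -/
def WidthLE (E : Finset (Sym2 V)) (L : List (Sym2 V)) (k : ℕ) : Prop :=
  ∀ i, dd E (L.take i).toFinset ≤ k

/-- The linearwidth of the edge set `E`: the minimum width of a layout of `E`. -/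
noncomputable def lw (E : Finset (Sym2 V)) : ℕ :=
  sInf {k | ∃ L, IsLayout E L ∧ WidthLE E L k}

/-- The number of edges of `S` incident to `u`. -/
def degIn (S : Finset (Sym2 V)) (u : V) : ℕ := (S.filter (fun e => u ∈ e)).card

/-- `X` is a path decomposition of `G`, given as a list of bags. -/
def IsPD (G : SimpleGraph V) (X : List (Finset V)) : Prop :=
  (∀ v : V, ∃ B ∈ X, v ∈ B) ∧
  (∀ e ∈ G.edgeSet, ∃ B ∈ X, eset e ⊆ B) ∧
  (∀ v : V, ∀ i j l : ℕ, i ≤ j → j ≤ l → l < X.length →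
    v ∈ X.getD i ∅ → v ∈ X.getD l ∅ → v ∈ X.getD j ∅)

/-- The pathwidth of `G`: the minimum over path decompositions of (max bag size) − 1. -/
noncomputable def pw (G : SimpleGraph V) : ℕ :=
  sInf {k | ∃ X, IsPD G X ∧ ∀ B ∈ X, B.card ≤ k + 1}

/-- The closure F* of `F` in `E`: all edges of `E` with both endpoints in `V(F)`. -/
def cl (E F : Finset (Sym2 V)) : Finset (Sym2 V) := E.filter (fun e => eset e ⊆ Vs F)

/-- A partial layout `S` is `k`-extendable: it is a prefix of some layout
of `E` of width at most `k`. -/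
def Extendable (E : Finset (Sym2 V)) (k : ℕ) (S : List (Sym2 V)) : Prop :=
  ∃ L, IsLayout E L ∧ WidthLE E L k ∧ S <+: L

lemma mem_Vs {F : Finset (Sym2 V)} {v : V} : v ∈ Vs F ↔ ∃ e ∈ F, v ∈ e := by
  simp [Vs]

lemma mem_eset {e : Sym2 V} {v : V} : v ∈ eset e ↔ v ∈ e := by
  simp [eset]

lemma card_eset_le_two (e : Sym2 V) : (eset e).card ≤ 2 := by
  have : eset e = e.toFinset := by ext; simp [eset]
  rw [this, Sym2.card_toFinset]
  split_ifs <;> omega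

lemma Vs_mono {F F' : Finset (Sym2 V)} (h : F ⊆ F') : Vs F ⊆ Vs F' := fun v hv => by
  obtain ⟨e, he, hve⟩ := mem_Vs.1 hv
  exact mem_Vs.2 ⟨e, h he, hve⟩

lemma Vs_insert (e : Sym2 V) (F : Finset (Sym2 V)) : Vs (insert e F) = eset e ∪ Vs F := by
  ext v
  simp [mem_Vs, mem_eset]

lemma Vs_toFinset_mono {l l' : List (Sym2 V)} (h : l ⊆ l') : Vs l.toFinset ⊆ Vs l'.toFinset :=
  Vs_mono fun _ he => List.mem_toFinset.2 (h (List.mem_toFinset.1 he))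

lemma toFinset_sdiff_toFinset_take {α : Type*} [DecidableEq α] {L : List α} (hL : L.Nodup)
    (t : ℕ) : L.toFinset \ (L.take t).toFinset = (L.drop t).toFinset := by
  have hdisj : Disjoint (L.take t).toFinset (L.drop t).toFinset :=
    List.disjoint_toFinset_iff_disjoint.2
      (List.disjoint_of_nodup_append ((List.take_append_drop t L).symm ▸ hL))
  calc L.toFinset \ (L.take t).toFinset
      = ((L.take t).toFinset ∪ (L.drop t).toFinset) \ (L.take t).toFinset := by
        rw [← List.toFinset_append, List.take_append_drop]
    _ = (L.drop t).toFinset := by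
        rw [Finset.union_sdiff_left, Finset.sdiff_eq_self_of_disjoint hdisj.symm]

lemma mem_take_or_mem_drop_succ_of_ne {α : Type*} {L : List α} {t : ℕ} (ht : t < L.length)
    {f : α} (hf : f ∈ L) (hft : f ≠ L[t]) : f ∈ L.take t ∨ f ∈ L.drop (t + 1) := by
  have hf' : f ∈ L.take t ++ L[t] :: L.drop (t + 1) := by
    rwa [← List.drop_eq_getElem_cons ht, List.take_append_drop]
  simpa only [List.mem_append, List.mem_cons, hft, false_or] using hf'

lemma Vs_toFinset_take_succ {L : List (Sym2 V)} {t : ℕ} (ht : t < L.length) :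
    Vs (L.take (t + 1)).toFinset = Vs (L.take t).toFinset ∪ eset L[t] := by
  rw [List.take_succ_eq_append_getElem ht, List.toFinset_append, List.toFinset_cons,
    List.toFinset_nil, Finset.union_insert, Finset.union_empty, Vs_insert, Finset.union_comm]

lemma Vs_toFinset_drop {L : List (Sym2 V)} {t : ℕ} (ht : t < L.length) :
    Vs (L.drop t).toFinset = eset L[t] ∪ Vs (L.drop (t + 1)).toFinset := by
  rw [List.drop_eq_getElem_cons ht, List.toFinset_cons, Vs_insert]

lemma mids_take {L : List (Sym2 V)} (hL : L.Nodup) (t : ℕ) :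
    mids L.toFinset (L.take t).toFinset = Vs (L.take t).toFinset ∩ Vs (L.drop t).toFinset := by
  rw [mids, toFinset_sdiff_toFinset_take hL]

/-- With `P` and `Q` the vertices of the edges before and after `e` in a layout, the cuts on
either side of `e` are `P ∩ (e ∪ Q)` and `(P ∪ e) ∩ Q`. -/
lemma card_union_inter_union_le {α : Type*} [DecidableEq α] {P Q e : Finset α} {k : ℕ} {w : α}
    (he : e.card ≤ 2) (hwe : w ∈ e) (hw : w ∈ P ∪ Q) (hP : (P ∩ (e ∪ Q)).card ≤ k)
    (hQ : ((P ∪ e) ∩ Q).card ≤ k) : ((P ∪ e) ∩ (e ∪ Q)).card ≤ k + 1 := by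
  have key : ∀ C : Finset α, C.card ≤ k → (P ∪ e) ∩ (e ∪ Q) ⊆ C ∪ e.erase w →
      ((P ∪ e) ∩ (e ∪ Q)).card ≤ k + 1 := fun C hC hsub =>
    calc ((P ∪ e) ∩ (e ∪ Q)).card ≤ (C ∪ e.erase w).card := Finset.card_le_card hsub
      _ ≤ C.card + (e.erase w).card := Finset.card_union_le _ _
      _ ≤ k + 1 := by rw [Finset.card_erase_of_mem hwe]; omega
  rcases Finset.mem_union.1 hw with hwP | hwQ
  · exact key _ hP fun x => by
      simp only [Finset.mem_union, Finset.mem_inter, Finset.mem_erase]; grind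
  · exact key _ hQ fun x => by
      simp only [Finset.mem_union, Finset.mem_inter, Finset.mem_erase]; grind

section ConsecutiveBags

variable {α : Type*}

def ConsecutiveBags (X : List (Finset α)) : Prop :=
  ∀ v : α, ∀ i j l : ℕ, i ≤ j → j ≤ l → l < X.length →
    v ∈ X.getD i ∅ → v ∈ X.getD l ∅ → v ∈ X.getD j ∅

lemma getD_mem_of_mem_getD {X : List (Finset α)} {i : ℕ} {v : α} (hv : v ∈ X.getD i ∅) :
    X.getD i ∅ ∈ X := by
  by_cases hi : i < X.length
  · rw [List.getD_eq_getElem _ _ hi]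
    exact List.getElem_mem hi
  · rw [List.getD_eq_default _ _ (not_lt.1 hi)] at hv
    simp at hv

lemma ConsecutiveBags.append {X Y : List (Finset α)} (hX : ConsecutiveBags X)
    (hY : ConsecutiveBags Y) (hXY : ∀ B ∈ X, ∀ C ∈ Y, Disjoint B C) :
    ConsecutiveBags (X ++ Y) := by
  intro v i j l hij hjl hl hvi hvl
  by_cases hlX : l < X.length
  · rw [List.getD_append _ _ _ _ (by omega)] at hvi hvl ⊢
    exact hX v i j l hij hjl hlX hvi hvl
  have hiX : X.length ≤ i := by
    by_contra hiX
    rw [List.getD_append _ _ _ _ (by omega)] at hvi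
    rw [List.getD_append_right _ _ _ _ (by omega)] at hvl
    exact Finset.disjoint_left.1
      (hXY _ (getD_mem_of_mem_getD hvi) _ (getD_mem_of_mem_getD hvl)) hvi hvl
  rw [List.getD_append_right _ _ _ _ (by omega)] at hvi hvl ⊢
  rw [List.length_append] at hl
  exact hY v (i - X.length) (j - X.length) (l - X.length) (by omega) (by omega) (by omega) hvi hvl

lemma consecutiveBags_of_pairwise_disjoint {X : List (Finset α)} (hX : X.Pairwise Disjoint) :
    ConsecutiveBags X := by
  intro v i j l hij hjl hl hvi hvl
  obtain hil | hil := eq_or_lt_of_le (hij.trans hjl)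
  · obtain rfl : i = j := by omega
    exact hvi
  rw [List.getD_eq_getElem _ _ (by omega)] at hvi
  rw [List.getD_eq_getElem _ _ hl] at hvl
  exact absurd (List.pairwise_iff_getElem.1 hX i l _ hl hil)
    (Finset.not_disjoint_iff.2 ⟨v, hvi, hvl⟩)

lemma consecutiveBags_map_range {f : ℕ → Finset α}
    (hf : ∀ v i j l, i ≤ j → j ≤ l → v ∈ f i → v ∈ f l → v ∈ f j) (n : ℕ) :
    ConsecutiveBags ((List.range n).map f) := by
  intro v i j l hij hjl hl hvi hvl
  simp only [List.length_map, List.length_range] at hl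
  have hget : ∀ m < n, ((List.range n).map f).getD m ∅ = f m := fun m hm => by
    rw [List.getD_eq_getElem _ _ (by simpa using hm), List.getElem_map, List.getElem_range]
  rw [hget i (by omega)] at hvi
  rw [hget l hl] at hvl
  rw [hget j (by omega)]
  exact hf v i j l hij hjl hvi hvl

end ConsecutiveBags

def isolatedEdges (E : Finset (Sym2 V)) : Finset (Sym2 V) :=
  E.filter fun e => ∀ f ∈ E, f ≠ e → Disjoint (eset f) (eset e)

lemma mem_isolatedEdges {E : Finset (Sym2 V)} {e : Sym2 V} :
    e ∈ isolatedEdges E ↔ e ∈ E ∧ ∀ f ∈ E, f ≠ e → Disjoint (eset f) (eset e) :=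
  Finset.mem_filter

lemma eq_of_mem_isolatedEdges {E : Finset (Sym2 V)} {e f : Sym2 V} {v : V}
    (he : e ∈ isolatedEdges E) (hf : f ∈ E) (hve : v ∈ e) (hvf : v ∈ f) : f = e := by
  by_contra hfe
  exact Finset.disjoint_left.1 ((mem_isolatedEdges.1 he).2 f hf hfe) (mem_eset.2 hvf)
    (mem_eset.2 hve)

lemma notMem_Vs_sdiff_isolatedEdges {E : Finset (Sym2 V)} {e : Sym2 V} {v : V}
    (he : e ∈ isolatedEdges E) (hv : v ∈ e) : v ∉ Vs (E \ isolatedEdges E) := by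
  intro hvE
  obtain ⟨f, hf, hvf⟩ := mem_Vs.1 hvE
  obtain ⟨hfE, hfi⟩ := Finset.mem_sdiff.1 hf
  exact hfi (eq_of_mem_isolatedEdges he hfE hv hvf ▸ he)

def smallComponents (E : Finset (Sym2 V)) : Finset (Finset V) :=
  (isolatedEdges E).image eset ∪ (Finset.univ \ Vs E).image singleton

lemma pairwise_disjoint_smallComponents (E : Finset (Sym2 V)) :
    (smallComponents E).toList.Pairwise Disjoint := by
  refine (Finset.nodup_toList _).pairwise_of_forall_ne fun B hB C hC hBC => ?_
  simp only [Finset.mem_toList, smallComponents, Finset.mem_union, Finset.mem_image,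
    Finset.mem_sdiff, Finset.mem_univ, true_and] at hB hC
  rcases hB with ⟨e, he, rfl⟩ | ⟨u, hu, rfl⟩ <;> rcases hC with ⟨f, hf, rfl⟩ | ⟨w, hw, rfl⟩
  · exact (mem_isolatedEdges.1 hf).2 e (mem_isolatedEdges.1 he).1 fun h => hBC (h ▸ rfl)
  · exact Finset.disjoint_singleton_right.2 fun hwe =>
      hw (mem_Vs.2 ⟨e, (mem_isolatedEdges.1 he).1, mem_eset.1 hwe⟩)
  · exact Finset.disjoint_singleton_left.2 fun huf =>
      hu (mem_Vs.2 ⟨f, (mem_isolatedEdges.1 hf).1, mem_eset.1 huf⟩)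
  · exact Finset.disjoint_singleton.2 fun huw => hBC (huw ▸ rfl)

lemma card_le_two_of_mem_smallComponents {E : Finset (Sym2 V)} {B : Finset V}
    (hB : B ∈ smallComponents E) : B.card ≤ 2 := by
  simp only [smallComponents, Finset.mem_union, Finset.mem_image] at hB
  rcases hB with ⟨e, -, rfl⟩ | ⟨u, -, rfl⟩
  · exact card_eset_le_two e
  · simp

lemma notMem_Vs_sdiff_isolatedEdges_of_mem_smallComponents {E : Finset (Sym2 V)}
    {B : Finset V} {v : V} (hB : B ∈ smallComponents E) (hv : v ∈ B) :
    v ∉ Vs (E \ isolatedEdges E) := by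
  simp only [smallComponents, Finset.mem_union, Finset.mem_image, Finset.mem_sdiff,
    Finset.mem_univ, true_and] at hB
  rcases hB with ⟨e, he, rfl⟩ | ⟨u, hu, rfl⟩
  · exact notMem_Vs_sdiff_isolatedEdges he (mem_eset.1 hv)
  · rw [Finset.mem_singleton.1 hv]
    exact fun h => hu (Vs_mono Finset.sdiff_subset h)

def spanBag (E : Finset (Sym2 V)) (L : List (Sym2 V)) (t : ℕ) : Finset V :=
  (Vs (L.take (t + 1)).toFinset ∩ Vs (L.drop t).toFinset).filter (· ∈ Vs (E \ isolatedEdges E))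

lemma mem_spanBag_of_le_of_le {E : Finset (Sym2 V)} {L : List (Sym2 V)} {v : V} {i j l : ℕ}
    (hij : i ≤ j) (hjl : j ≤ l) (hi : v ∈ spanBag E L i) (hl : v ∈ spanBag E L l) :
    v ∈ spanBag E L j := by
  simp only [spanBag, Finset.mem_filter, Finset.mem_inter] at hi hl ⊢
  exact ⟨⟨Vs_toFinset_mono (List.take_subset_take_left L (by omega)) hi.1.1,
    Vs_toFinset_mono (List.drop_subset_drop_left L hjl) hl.1.2⟩, hi.2⟩

lemma eset_subset_spanBag {E : Finset (Sym2 V)} {L : List (Sym2 V)} {t : ℕ} (ht : t < L.length)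
    (hE : L[t] ∈ E \ isolatedEdges E) : eset L[t] ⊆ spanBag E L t := by
  intro v hv
  have hvt : v ∈ L[t] := mem_eset.1 hv
  simp only [spanBag, Finset.mem_filter, Finset.mem_inter, mem_Vs, List.mem_toFinset]
  refine ⟨⟨⟨L[t], ?_, hvt⟩, ⟨L[t], ?_, hvt⟩⟩, ⟨L[t], hE, hvt⟩⟩
  · rw [List.take_succ_eq_append_getElem ht]
    exact List.mem_append_right _ (List.mem_singleton_self _)
  · rw [List.drop_eq_getElem_cons ht]
    exact List.mem_cons_self

lemma card_spanBag_le {E : Finset (Sym2 V)} {L : List (Sym2 V)} {k t : ℕ} (hL : IsLayout E L)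
    (hW : WidthLE E L k) (ht : t < L.length) : (spanBag E L t).card ≤ k + 1 := by
  obtain ⟨hN, rfl⟩ := hL
  have hcut : ∀ s, (Vs (L.take s).toFinset ∩ Vs (L.drop s).toFinset).card ≤ k := fun s => by
    rw [← mids_take hN]
    exact hW s
  have htake := Vs_toFinset_take_succ ht
  have hdrop := Vs_toFinset_drop ht
  set e := L[t]
  set P := Vs (L.take t).toFinset
  set Q := Vs (L.drop (t + 1)).toFinset
  have hbag : spanBag L.toFinset L t =
      ((P ∪ eset e) ∩ (eset e ∪ Q)).filter (· ∈ Vs (L.toFinset \ isolatedEdges L.toFinset)) := by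
    rw [spanBag, htake, hdrop]
  by_cases hiso : e ∈ isolatedEdges L.toFinset
  · -- the vertices of an isolated edge are left out of the bag, which is then inside the cut
    calc (spanBag L.toFinset L t).card ≤ (P ∩ (eset e ∪ Q)).card := by
          refine Finset.card_le_card fun v hv => ?_
          rw [hbag] at hv
          have hve : v ∉ eset e := fun hve =>
            notMem_Vs_sdiff_isolatedEdges hiso (mem_eset.1 hve) (Finset.mem_filter.1 hv).2
          simp only [Finset.mem_filter, Finset.mem_inter, Finset.mem_union] at hv ⊢
          tauto
      _ ≤ k := hdrop ▸ hcut t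
      _ ≤ k + 1 := k.le_succ
  · obtain ⟨f, hf, hfe, hdisj⟩ : ∃ f ∈ L.toFinset, f ≠ e ∧ ¬Disjoint (eset f) (eset e) := by
      simpa [mem_isolatedEdges, e] using hiso
    obtain ⟨w, hwf, hwe⟩ := Finset.not_disjoint_iff.1 hdisj
    have hw : w ∈ P ∪ Q := by
      rcases mem_take_or_mem_drop_succ_of_ne ht (List.mem_toFinset.1 hf) hfe with hfL | hfL
      · exact Finset.mem_union_left _ (mem_Vs.2 ⟨f, List.mem_toFinset.2 hfL, mem_eset.1 hwf⟩)
      · exact Finset.mem_union_right _ (mem_Vs.2 ⟨f, List.mem_toFinset.2 hfL, mem_eset.1 hwf⟩)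
    rw [hbag]
    exact (Finset.card_filter_le _ _).trans (card_union_inter_union_le (card_eset_le_two e) hwe hw
      (hdrop ▸ hcut t) (htake ▸ hcut (t + 1)))

noncomputable def layoutBags (E : Finset (Sym2 V)) (L : List (Sym2 V)) : List (Finset V) :=
  (smallComponents E).toList ++ (List.range L.length).map (spanBag E L)

lemma exists_mem_layoutBags_eset_subset {E : Finset (Sym2 V)} {L : List (Sym2 V)}
    (hL : IsLayout E L) {e : Sym2 V} (he : e ∈ E) : ∃ B ∈ layoutBags E L, eset e ⊆ B := by
  by_cases hiso : e ∈ isolatedEdges E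
  · refine ⟨eset e, List.mem_append_left _ (Finset.mem_toList.2 ?_), subset_rfl⟩
    exact Finset.mem_union_left _ (Finset.mem_image_of_mem _ hiso)
  · obtain ⟨t, ht, rfl⟩ := List.mem_iff_getElem.1 (List.mem_toFinset.1 (hL.2 ▸ he))
    exact ⟨spanBag E L t, List.mem_append_right _ (List.mem_map.2 ⟨t, List.mem_range.2 ht, rfl⟩),
      eset_subset_spanBag ht (Finset.mem_sdiff.2 ⟨he, hiso⟩)⟩

lemma isPD_layoutBags {G : SimpleGraph V} [DecidableRel G.Adj] {L : List (Sym2 V)}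
    (hL : IsLayout G.edgeFinset L) : IsPD G (layoutBags G.edgeFinset L) := by
  refine ⟨fun v => ?_,
    fun e he => exists_mem_layoutBags_eset_subset hL (SimpleGraph.mem_edgeFinset.2 he), ?_⟩
  · by_cases hv : v ∈ Vs G.edgeFinset
    · obtain ⟨e, he, hve⟩ := mem_Vs.1 hv
      obtain ⟨B, hB, heB⟩ := exists_mem_layoutBags_eset_subset hL he
      exact ⟨B, hB, heB (mem_eset.2 hve)⟩
    · refine ⟨{v}, List.mem_append_left _ (Finset.mem_toList.2 ?_), Finset.mem_singleton_self v⟩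
      exact Finset.mem_union_right _ (Finset.mem_image_of_mem _ (by simpa using hv))
  · refine (consecutiveBags_of_pairwise_disjoint (pairwise_disjoint_smallComponents _)).append
      (consecutiveBags_map_range (fun _ _ _ _ hij hjl => mem_spanBag_of_le_of_le hij hjl) _)
      fun B hB C hC => ?_
    obtain ⟨t, -, rfl⟩ := List.mem_map.1 hC
    exact Finset.disjoint_left.2 fun v hvB hvC =>
      notMem_Vs_sdiff_isolatedEdges_of_mem_smallComponents (Finset.mem_toList.1 hB) hvB
        (Finset.mem_filter.1 hvC).2

lemma card_le_of_mem_layoutBags {E : Finset (Sym2 V)} {L : List (Sym2 V)} {k : ℕ}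
    (hL : IsLayout E L) (hW : WidthLE E L k) (hk : 1 ≤ k) :
    ∀ B ∈ layoutBags E L, B.card ≤ k + 1 := by
  intro B hB
  rcases List.mem_append.1 hB with hB | hB
  · exact (card_le_two_of_mem_smallComponents (Finset.mem_toList.1 hB)).trans (by omega)
  · obtain ⟨t, ht, rfl⟩ := List.mem_map.1 hB
    exact card_spanBag_le hL hW (List.mem_range.1 ht)

lemma exists_isLayout_widthLE_lw (E : Finset (Sym2 V)) : ∃ L, IsLayout E L ∧ WidthLE E L (lw E) :=
  Nat.sInf_mem (s := {k | ∃ L, IsLayout E L ∧ WidthLE E L k})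
    ⟨Fintype.card V, E.toList, ⟨E.nodup_toList, E.toList_toFinset⟩, fun _ => Finset.card_le_univ _⟩

/-- For every graph with lw(G) ≥ 1, pw(G) ≤ lw(G). -/
theorem stmt7 (G : SimpleGraph V) [DecidableRel G.Adj]
    (h : 1 ≤ lw G.edgeFinset) : pw G ≤ lw G.edgeFinset := by
  obtain ⟨L, hL, hW⟩ := exists_isLayout_widthLE_lw G.edgeFinset
  exact Nat.sInf_le (s := {k | ∃ X, IsPD G X ∧ ∀ B ∈ X, B.card ≤ k + 1})
    ⟨layoutBags G.edgeFinset L, isPD_layoutBags hL, card_le_of_mem_layoutBags hL hW h⟩
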